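/- The optimal path cost obtained by planning on the Critical Joint State Graph equals the optimal path cost obtained by planning directly on the Joint State Graph: Q(u†) = Q(u*). -/
import Mathlib


open scoped Classical

variable {V : Type}

/-- A path from `a` to `b` given as a list of edges (vertex pairs). -/
def IsPath (adj : V → V → Prop) : V → V → List (V × V) → Prop
  | a, b, [] => a = b
  | a, b, e :: p => e.1 = a ∧ adj e.1 e.2 ∧ IsPath adj e.2 b p

/-- Cost of a path: sum of its edge costs. -/
noncomputable def pathCost (c : V → V → ℝ) (p : List (V × V)) : ℝ :=
  (p.map fun e => c e.1 e.2).sum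

/-- ψ a b : minimum cost to move from a to b on the base graph. -/
noncomputable def psi (adj : V → V → Prop) (c : V → V → ℝ) (a b : V) : ℝ :=
  sInf {x | ∃ p, IsPath adj a b p ∧ pathCost c p = x}

/-- The base graph is strongly connected. -/
def StronglyConnected (adj : V → V → Prop) : Prop :=
  ∀ a b : V, ∃ p, IsPath adj a b p

/-- JSG adjacency: each agent either stays at its node or moves along an edge. -/
def jsgAdj (adj : V → V → Prop) (s t : V × V) : Prop :=
  (t.1 = s.1 ∨ adj s.1 t.1) ∧ (t.2 = s.2 ∨ adj s.2 t.2)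

/-- Support-aware JSG edge cost (Algorithm 1): if one agent stays at a support
node of the risky edge the other traverses, the cost is
`min {c, c̄ + c_s}`; otherwise costs of individual moves are summed. -/
noncomputable def jsgCost (c cbar : V → V → ℝ) (cs : ℝ) (Z : V → V → Set V)
    (s t : V × V) : ℝ :=
  if s.1 = t.1 ∧ s.2 = t.2 then 0
  else if s.1 = t.1 then
    (if s.1 ∈ Z s.2 t.2 then min (c s.2 t.2) (cbar s.2 t.2 + cs) else c s.2 t.2)
  else if s.2 = t.2 then
    (if s.2 ∈ Z s.1 t.1 then min (c s.1 t.1) (cbar s.1 t.1 + cs) else c s.1 t.1)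
  else c s.1 t.1 + c s.2 t.2

/-- Cost Q(u) of a joint path u in the JSG. -/
noncomputable def Q (c cbar : V → V → ℝ) (cs : ℝ) (Z : V → V → Set V)
    (u : List ((V × V) × (V × V))) : ℝ :=
  (u.map fun e => jsgCost c cbar cs Z e.1 e.2).sum

/-- Shortest-path cost in the JSG between two joint states. -/
noncomputable def jsgDist (adj : V → V → Prop) (c cbar : V → V → ℝ) (cs : ℝ)
    (Z : V → V → Set V) (s t : V × V) : ℝ :=
  sInf {x | ∃ u, IsPath (jsgAdj adj) s t u ∧ Q c cbar cs Z u = x}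

/-- A risky edge: an edge with a nonempty support set. -/
def Risky (adj : V → V → Prop) (Z : V → V → Set V) (i j : V) : Prop :=
  adj i j ∧ (Z i j).Nonempty

/-- Critical joint states: joint states where a supporting behavior
can be initiated or completed. -/
def Critical (adj : V → V → Prop) (Z : V → V → Set V) (s : V × V) : Prop :=
  ∃ i j k, Risky adj Z i j ∧ k ∈ Z i j ∧
    (s = (k, i) ∨ s = (k, j) ∨ s = (i, k) ∨ s = (j, k))

/-- Node set of the CJSG: all critical joint states plus start and goal. -/
def Mset (adj : V → V → Prop) (Z : V → V → Set V) (vstart vgoal : V) :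
    Set (V × V) :=
  {s | Critical adj Z s} ∪ {(vstart, vstart), (vgoal, vgoal)}

/-- The CJSG is fully connected on its node set. -/
def cjsgAdj (adj : V → V → Prop) (Z : V → V → Set V) (vstart vgoal : V)
    (s t : V × V) : Prop :=
  s ∈ Mset adj Z vstart vgoal ∧ t ∈ Mset adj Z vstart vgoal

/-- CJSG edge cost (Algorithm 2): supported cost when applicable, vs the
decoupled two-agent shortest-path cost `R = ψ + ψ`. -/
noncomputable def W (adj : V → V → Prop) (c cbar : V → V → ℝ) (cs : ℝ)
    (Z : V → V → Set V) (s t : V × V) : ℝ :=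
  if s.1 = t.1 ∧ adj s.2 t.2 ∧ s.1 ∈ Z s.2 t.2 then
    min (cbar s.2 t.2 + cs) (psi adj c s.1 t.1 + psi adj c s.2 t.2)
  else if s.2 = t.2 ∧ adj s.1 t.1 ∧ s.2 ∈ Z s.1 t.1 then
    min (cbar s.1 t.1 + cs) (psi adj c s.1 t.1 + psi adj c s.2 t.2)
  else psi adj c s.1 t.1 + psi adj c s.2 t.2

/-- Cost of a path on the CJSG. -/
noncomputable def Wcost (adj : V → V → Prop) (c cbar : V → V → ℝ) (cs : ℝ)
    (Z : V → V → Set V) (u : List ((V × V) × (V × V))) : ℝ :=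
  (u.map fun e => W adj c cbar cs Z e.1 e.2).sum

/-- Optimal joint-path cost Q(u*) on the JSG from start to goal. -/
noncomputable def Qstar (adj : V → V → Prop) (c cbar : V → V → ℝ) (cs : ℝ)
    (Z : V → V → Set V) (vstart vgoal : V) : ℝ :=
  jsgDist adj c cbar cs Z (vstart, vstart) (vgoal, vgoal)

/-- Optimal path cost obtained by planning on the CJSG from start to goal. -/
noncomputable def cjsgOpt (adj : V → V → Prop) (c cbar : V → V → ℝ) (cs : ℝ)
    (Z : V → V → Set V) (vstart vgoal : V) : ℝ :=
  sInf {x | ∃ u, IsPath (cjsgAdj adj Z vstart vgoal)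
    (vstart, vstart) (vgoal, vgoal) u ∧ Wcost adj c cbar cs Z u = x}

section Aux

variable (adj : V → V → Prop) (c cbar : V → V → ℝ) (cs : ℝ) (Z : V → V → Set V)

lemma isPath_append {adj : V → V → Prop} :
    ∀ {p : List (V × V)} {a b d : V} (q : List (V × V)),
      IsPath adj a b p → IsPath adj b d q → IsPath adj a d (p ++ q)
  | [], a, b, d, q, hp, hq => by cases hp; exact hq
  | e :: p, a, b, d, q, hp, hq => by
      obtain ⟨h1, h2, h3⟩ := hp
      exact ⟨h1, h2, isPath_append q h3 hq⟩

lemma pathCost_append (p q : List (V × V)) :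
    pathCost c (p ++ q) = pathCost c p + pathCost c q := by
  simp [pathCost]

lemma pathCost_nonneg (hc : ∀ i j, 0 ≤ c i j) (p : List (V × V)) :
    0 ≤ pathCost c p := by
  apply List.sum_nonneg
  rintro x hx
  simp only [List.mem_map] at hx
  obtain ⟨e, _, rfl⟩ := hx
  exact hc _ _

lemma psi_le (hc : ∀ i j, 0 ≤ c i j) {a b : V} {p : List (V × V)}
    (h : IsPath adj a b p) : psi adj c a b ≤ pathCost c p := by
  refine csInf_le ⟨0, ?_⟩ ⟨p, h, rfl⟩
  rintro x ⟨q, _, rfl⟩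
  exact pathCost_nonneg c hc q

lemma le_psi (hconn : StronglyConnected adj) {a b : V} {y : ℝ}
    (h : ∀ p, IsPath adj a b p → y ≤ pathCost c p) : y ≤ psi adj c a b := by
  obtain ⟨p0, hp0⟩ := hconn a b
  exact le_csInf ⟨_, p0, hp0, rfl⟩ (by rintro x ⟨p, hp, rfl⟩; exact h p hp)

lemma psi_nonneg (hconn : StronglyConnected adj) (hc : ∀ i j, 0 ≤ c i j)
    (a b : V) : 0 ≤ psi adj c a b :=
  le_psi adj c hconn fun p _ => pathCost_nonneg c hc p

lemma psi_self (hconn : StronglyConnected adj) (hc : ∀ i j, 0 ≤ c i j)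
    (a : V) : psi adj c a a = 0 := by
  refine le_antisymm ?_ (psi_nonneg adj c hconn hc a a)
  have := psi_le adj c hc (a := a) (b := a) (p := []) rfl
  simpa [pathCost] using this

lemma psi_edge (hc : ∀ i j, 0 ≤ c i j) {a b : V} (h : adj a b) :
    psi adj c a b ≤ c a b := by
  have := psi_le adj c hc (a := a) (b := b) (p := [(a, b)]) ⟨rfl, h, rfl⟩
  simpa [pathCost] using this

lemma psi_triangle (hconn : StronglyConnected adj) (hc : ∀ i j, 0 ≤ c i j)
    (a b d : V) : psi adj c a d ≤ psi adj c a b + psi adj c b d := by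
  rw [← sub_le_iff_le_add]
  apply le_psi adj c hconn
  intro p hp
  rw [sub_le_iff_le_add, ← sub_le_iff_le_add']
  apply le_psi adj c hconn
  intro q hq
  rw [sub_le_iff_le_add']
  calc psi adj c a d ≤ pathCost c (p ++ q) :=
        psi_le adj c hc (isPath_append q hp hq)
    _ = pathCost c p + pathCost c q := pathCost_append c p q

lemma jsgCost_nonneg (hc : ∀ i j, 0 ≤ c i j) (hcbar : ∀ i j, 0 ≤ cbar i j)
    (hcs : 0 ≤ cs) (s t : V × V) : 0 ≤ jsgCost c cbar cs Z s t := by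
  unfold jsgCost
  split_ifs <;>
    first
      | exact le_refl 0
      | exact hc _ _
      | exact le_min (hc _ _) (add_nonneg (hcbar _ _) hcs)
      | exact add_nonneg (hc _ _) (hc _ _)

lemma Q_nonneg (hc : ∀ i j, 0 ≤ c i j) (hcbar : ∀ i j, 0 ≤ cbar i j)
    (hcs : 0 ≤ cs) (u : List ((V × V) × (V × V))) : 0 ≤ Q c cbar cs Z u := by
  apply List.sum_nonneg
  rintro x hx
  simp only [List.mem_map] at hx
  obtain ⟨e, _, rfl⟩ := hx
  exact jsgCost_nonneg c cbar cs Z hc hcbar hcs _ _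

lemma Q_append (u v : List ((V × V) × (V × V))) :
    Q c cbar cs Z (u ++ v) = Q c cbar cs Z u + Q c cbar cs Z v := by
  simp [Q]

lemma jsgCost_fst_le (hc : ∀ i j, 0 ≤ c i j) (a b w : V) :
    jsgCost c cbar cs Z (a, w) (b, w) ≤ c a b := by
  unfold jsgCost
  split_ifs <;> first | exact hc a b | exact min_le_left _ _ | exact le_refl _ | tauto

lemma jsgCost_snd_le (hc : ∀ i j, 0 ≤ c i j) (a b w : V) :
    jsgCost c cbar cs Z (w, a) (w, b) ≤ c a b := by
  unfold jsgCost
  split_ifs <;> first | exact hc a b | exact min_le_left _ _ | exact le_refl _ | tauto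

lemma jsgCost_sup_fst (hcbar : ∀ i j, 0 ≤ cbar i j) (hcs : 0 ≤ cs)
    {s t : V × V} (h : s.1 = t.1) (hz : s.1 ∈ Z s.2 t.2) :
    jsgCost c cbar cs Z s t ≤ cbar s.2 t.2 + cs := by
  unfold jsgCost
  split_ifs <;>
    first | exact add_nonneg (hcbar _ _) hcs | exact min_le_right _ _ | tauto

lemma jsgCost_sup_snd (hcbar : ∀ i j, 0 ≤ cbar i j) (hcs : 0 ≤ cs)
    {s t : V × V} (h : s.2 = t.2) (hz : s.2 ∈ Z s.1 t.1) :
    jsgCost c cbar cs Z s t ≤ cbar s.1 t.1 + cs := by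
  unfold jsgCost
  split_ifs <;>
    first | exact add_nonneg (hcbar _ _) hcs | exact min_le_right _ _ | tauto

/-- Lift a base path for agent 1 (agent 2 stays at `w`). -/
lemma lift_fst (hc : ∀ i j, 0 ≤ c i j) :
    ∀ (p : List (V × V)) (a b w : V), IsPath adj a b p →
      ∃ u, IsPath (jsgAdj adj) (a, w) (b, w) u ∧
        Q c cbar cs Z u ≤ pathCost c p
  | [], a, b, w, hp => by cases hp; exact ⟨[], rfl, by simp [Q, pathCost]⟩
  | e :: p, a, b, w, hp => by
      obtain ⟨h1, h2, h3⟩ := hp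
      obtain ⟨u, hu, hQ⟩ := lift_fst hc p e.2 b w h3
      refine ⟨((a, w), (e.2, w)) :: u, ⟨rfl, ⟨Or.inr (h1 ▸ h2), Or.inl rfl⟩, hu⟩, ?_⟩
      have h4 : jsgCost c cbar cs Z (a, w) (e.2, w) ≤ c a e.2 :=
        jsgCost_fst_le c cbar cs Z hc a e.2 w
      have h5 : pathCost c (e :: p) = c e.1 e.2 + pathCost c p := by simp [pathCost]
      have h6 : Q c cbar cs Z (((a, w), (e.2, w)) :: u)
          = jsgCost c cbar cs Z (a, w) (e.2, w) + Q c cbar cs Z u := by simp [Q]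
      rw [h5, h6, h1]
      linarith

/-- Lift a base path for agent 2 (agent 1 stays at `w`). -/
lemma lift_snd (hc : ∀ i j, 0 ≤ c i j) :
    ∀ (p : List (V × V)) (a b w : V), IsPath adj a b p →
      ∃ u, IsPath (jsgAdj adj) (w, a) (w, b) u ∧
        Q c cbar cs Z u ≤ pathCost c p
  | [], a, b, w, hp => by cases hp; exact ⟨[], rfl, by simp [Q, pathCost]⟩
  | e :: p, a, b, w, hp => by
      obtain ⟨h1, h2, h3⟩ := hp
      obtain ⟨u, hu, hQ⟩ := lift_snd hc p e.2 b w h3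
      refine ⟨((w, a), (w, e.2)) :: u, ⟨rfl, ⟨Or.inl rfl, Or.inr (h1 ▸ h2)⟩, hu⟩, ?_⟩
      have h4 : jsgCost c cbar cs Z (w, a) (w, e.2) ≤ c a e.2 :=
        jsgCost_snd_le c cbar cs Z hc a e.2 w
      have h5 : pathCost c (e :: p) = c e.1 e.2 + pathCost c p := by simp [pathCost]
      have h6 : Q c cbar cs Z (((w, a), (w, e.2)) :: u)
          = jsgCost c cbar cs Z (w, a) (w, e.2) + Q c cbar cs Z u := by simp [Q]
      rw [h5, h6, h1]
      linarith

lemma jsg_path_fst :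
    ∀ (p : List (V × V)) (a b w : V), IsPath adj a b p →
      ∃ u, IsPath (jsgAdj adj) (a, w) (b, w) u
  | [], a, b, w, hp => by cases hp; exact ⟨[], rfl⟩
  | e :: p, a, b, w, hp => by
      obtain ⟨h1, h2, h3⟩ := hp
      obtain ⟨u, hu⟩ := jsg_path_fst p e.2 b w h3
      exact ⟨((a, w), (e.2, w)) :: u, rfl, ⟨Or.inr (h1 ▸ h2), Or.inl rfl⟩, hu⟩

lemma jsg_path_snd :
    ∀ (p : List (V × V)) (a b w : V), IsPath adj a b p →
      ∃ u, IsPath (jsgAdj adj) (w, a) (w, b) u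
  | [], a, b, w, hp => by cases hp; exact ⟨[], rfl⟩
  | e :: p, a, b, w, hp => by
      obtain ⟨h1, h2, h3⟩ := hp
      obtain ⟨u, hu⟩ := jsg_path_snd p e.2 b w h3
      exact ⟨((w, a), (w, e.2)) :: u, rfl, ⟨Or.inl rfl, Or.inr (h1 ▸ h2)⟩, hu⟩

lemma jsg_conn (hconn : StronglyConnected adj) (s t : V × V) :
    ∃ u, IsPath (jsgAdj adj) s t u := by
  obtain ⟨p, hp⟩ := hconn s.1 t.1
  obtain ⟨q, hq⟩ := hconn s.2 t.2
  obtain ⟨u1, hu1⟩ := jsg_path_fst adj p s.1 t.1 s.2 hp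
  obtain ⟨u2, hu2⟩ := jsg_path_snd adj q s.2 t.2 t.1 hq
  exact ⟨u1 ++ u2, isPath_append u2 hu1 hu2⟩

lemma jsgDist_le (hc : ∀ i j, 0 ≤ c i j) (hcbar : ∀ i j, 0 ≤ cbar i j)
    (hcs : 0 ≤ cs) {s t : V × V} {u : List ((V × V) × (V × V))}
    (h : IsPath (jsgAdj adj) s t u) :
    jsgDist adj c cbar cs Z s t ≤ Q c cbar cs Z u := by
  refine csInf_le ⟨0, ?_⟩ ⟨u, h, rfl⟩
  rintro x ⟨v, _, rfl⟩
  exact Q_nonneg c cbar cs Z hc hcbar hcs v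

lemma le_jsgDist (hconn : StronglyConnected adj) (hc : ∀ i j, 0 ≤ c i j)
    {s t : V × V} {y : ℝ}
    (h : ∀ u, IsPath (jsgAdj adj) s t u → y ≤ Q c cbar cs Z u) :
    y ≤ jsgDist adj c cbar cs Z s t := by
  obtain ⟨u0, hu0⟩ := jsg_conn adj hconn s t
  exact le_csInf ⟨_, u0, hu0, rfl⟩ (by rintro x ⟨u, hu, rfl⟩; exact h u hu)

lemma jsgDist_le_psi (hconn : StronglyConnected adj) (hc : ∀ i j, 0 ≤ c i j)
    (hcbar : ∀ i j, 0 ≤ cbar i j) (hcs : 0 ≤ cs) (s t : V × V) :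
    jsgDist adj c cbar cs Z s t ≤ psi adj c s.1 t.1 + psi adj c s.2 t.2 := by
  rw [← sub_le_iff_le_add]
  apply le_psi adj c hconn
  intro p hp
  rw [sub_le_iff_le_add, ← sub_le_iff_le_add']
  apply le_psi adj c hconn
  intro q hq
  rw [sub_le_iff_le_add']
  obtain ⟨u1, hu1, hQ1⟩ := lift_fst adj c cbar cs Z hc p s.1 t.1 s.2 hp
  obtain ⟨u2, hu2, hQ2⟩ := lift_snd adj c cbar cs Z hc q s.2 t.2 t.1 hq
  have := jsgDist_le adj c cbar cs Z hc hcbar hcs (isPath_append u2 hu1 hu2)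
  rw [Q_append] at this
  simp only [Prod.mk.eta] at this
  linarith

lemma jsgDist_triangle (hconn : StronglyConnected adj) (hc : ∀ i j, 0 ≤ c i j)
    (hcbar : ∀ i j, 0 ≤ cbar i j) (hcs : 0 ≤ cs) (a b d : V × V) :
    jsgDist adj c cbar cs Z a d ≤
      jsgDist adj c cbar cs Z a b + jsgDist adj c cbar cs Z b d := by
  rw [← sub_le_iff_le_add]
  apply le_jsgDist adj c cbar cs Z hconn hc
  intro p hp
  rw [sub_le_iff_le_add, ← sub_le_iff_le_add']
  apply le_jsgDist adj c cbar cs Z hconn hc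
  intro q hq
  rw [sub_le_iff_le_add']
  have := jsgDist_le adj c cbar cs Z hc hcbar hcs (isPath_append q hp hq)
  rw [Q_append] at this
  linarith

lemma W_le_psi (s t : V × V) :
    W adj c cbar cs Z s t ≤ psi adj c s.1 t.1 + psi adj c s.2 t.2 := by
  unfold W
  split_ifs
  · exact min_le_right _ _
  · exact min_le_right _ _
  · exact le_refl _

lemma jsgDist_le_W (hconn : StronglyConnected adj) (hc : ∀ i j, 0 ≤ c i j)
    (hcbar : ∀ i j, 0 ≤ cbar i j) (hcs : 0 ≤ cs) (s t : V × V) :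
    jsgDist adj c cbar cs Z s t ≤ W adj c cbar cs Z s t := by
  have hpsi := jsgDist_le_psi adj c cbar cs Z hconn hc hcbar hcs s t
  unfold W
  split_ifs with h1 h2
  · refine le_min ?_ hpsi
    obtain ⟨heq, hadj, hz⟩ := h1
    have hpath : IsPath (jsgAdj adj) s t [(s, t)] :=
      ⟨rfl, ⟨Or.inl heq.symm, Or.inr hadj⟩, rfl⟩
    have := jsgDist_le adj c cbar cs Z hc hcbar hcs hpath
    have h2 : Q c cbar cs Z [(s, t)] = jsgCost c cbar cs Z s t := by simp [Q]
    rw [h2] at this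
    exact this.trans (jsgCost_sup_fst c cbar cs Z hcbar hcs heq hz)
  · refine le_min ?_ hpsi
    obtain ⟨heq, hadj, hz⟩ := h2
    have hpath : IsPath (jsgAdj adj) s t [(s, t)] :=
      ⟨rfl, ⟨Or.inr hadj, Or.inl heq.symm⟩, rfl⟩
    have := jsgDist_le adj c cbar cs Z hc hcbar hcs hpath
    have h3 : Q c cbar cs Z [(s, t)] = jsgCost c cbar cs Z s t := by simp [Q]
    rw [h3] at this
    exact this.trans (jsgCost_sup_snd c cbar cs Z hcbar hcs heq hz)
  · exact hpsi

lemma jsgDist_le_Wcost (hconn : StronglyConnected adj) (hc : ∀ i j, 0 ≤ c i j)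
    (hcbar : ∀ i j, 0 ≤ cbar i j) (hcs : 0 ≤ cs) (vstart vgoal : V) :
    ∀ (w : List ((V × V) × (V × V))) (a b : V × V),
      IsPath (cjsgAdj adj Z vstart vgoal) a b w →
      jsgDist adj c cbar cs Z a b ≤ Wcost adj c cbar cs Z w
  | [], a, b, hp => by
      cases hp
      have := jsgDist_le adj c cbar cs Z hc hcbar hcs
        (s := a) (t := a) (u := []) rfl
      simpa [Q, Wcost] using this
  | e :: w, a, b, hp => by
      obtain ⟨h1, h2, h3⟩ := hp
      have ih := jsgDist_le_Wcost hconn hc hcbar hcs vstart vgoal w e.2 b h3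
      have htri := jsgDist_triangle adj c cbar cs Z hconn hc hcbar hcs a e.2 b
      have hW := jsgDist_le_W adj c cbar cs Z hconn hc hcbar hcs a e.2
      have h4 : Wcost adj c cbar cs Z (e :: w)
          = W adj c cbar cs Z e.1 e.2 + Wcost adj c cbar cs Z w := by simp [Wcost]
      rw [h4, h1]
      linarith

lemma W_nonneg (hconn : StronglyConnected adj) (hc : ∀ i j, 0 ≤ c i j)
    (hcbar : ∀ i j, 0 ≤ cbar i j) (hcs : 0 ≤ cs) (s t : V × V) :
    0 ≤ W adj c cbar cs Z s t := by
  have hp : 0 ≤ psi adj c s.1 t.1 + psi adj c s.2 t.2 :=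
    add_nonneg (psi_nonneg adj c hconn hc _ _) (psi_nonneg adj c hconn hc _ _)
  unfold W
  split_ifs
  · exact le_min (add_nonneg (hcbar _ _) hcs) hp
  · exact le_min (add_nonneg (hcbar _ _) hcs) hp
  · exact hp

lemma Wcost_nonneg (hconn : StronglyConnected adj) (hc : ∀ i j, 0 ≤ c i j)
    (hcbar : ∀ i j, 0 ≤ cbar i j) (hcs : 0 ≤ cs)
    (w : List ((V × V) × (V × V))) : 0 ≤ Wcost adj c cbar cs Z w := by
  apply List.sum_nonneg
  rintro x hx
  simp only [List.mem_map] at hx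
  obtain ⟨e, _, rfl⟩ := hx
  exact W_nonneg adj c cbar cs Z hconn hc hcbar hcs _ _

lemma key (vstart vgoal : V) (hconn : StronglyConnected adj)
    (hc : ∀ i j, 0 ≤ c i j) (hcbar : ∀ i j, 0 ≤ cbar i j) (hcs : 0 ≤ cs) :
    ∀ (u : List ((V × V) × (V × V))) (s t : V × V),
      IsPath (jsgAdj adj) s t u → t ∈ Mset adj Z vstart vgoal →
      ∀ m ∈ Mset adj Z vstart vgoal,
      ∃ w, IsPath (cjsgAdj adj Z vstart vgoal) m t w ∧
        Wcost adj c cbar cs Z w ≤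
          psi adj c m.1 s.1 + psi adj c m.2 s.2 + Q c cbar cs Z u := by
  intro u
  induction u with
  | nil =>
    intro s t hp ht m hm
    cases hp
    refine ⟨[(m, s)], ⟨rfl, ⟨hm, ht⟩, rfl⟩, ?_⟩
    have h1 : Wcost adj c cbar cs Z [(m, s)] = W adj c cbar cs Z m s := by
      simp [Wcost]
    have h2 : Q c cbar cs Z ([] : List ((V × V) × (V × V))) = 0 := rfl
    rw [h1, h2]
    have := W_le_psi adj c cbar cs Z m s
    linarith
  | cons e u' ih =>
    intro s t hp ht m hm
    obtain ⟨he1, hadj, hrest⟩ := hp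
    obtain ⟨⟨a1, a2⟩, ⟨b1, b2⟩⟩ := e
    have he1' : (a1, a2) = s := he1
    subst he1'
    obtain ⟨hA1, hA2⟩ := hadj
    have hQ : Q c cbar cs Z (((a1, a2), (b1, b2)) :: u')
        = jsgCost c cbar cs Z (a1, a2) (b1, b2) + Q c cbar cs Z u' := by
      simp [Q]
    have doN : psi adj c a1 b1 + psi adj c a2 b2 ≤
          jsgCost c cbar cs Z (a1, a2) (b1, b2) →
        ∃ w, IsPath (cjsgAdj adj Z vstart vgoal) m t w ∧
          Wcost adj c cbar cs Z w ≤
            psi adj c m.1 (a1, a2).1 + psi adj c m.2 (a1, a2).2 +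
              Q c cbar cs Z (((a1, a2), (b1, b2)) :: u') := by
      intro hψ
      obtain ⟨w, hw, hcost⟩ := ih (b1, b2) t hrest ht m hm
      refine ⟨w, hw, ?_⟩
      rw [hQ]
      have t1 := psi_triangle adj c hconn hc m.1 a1 b1
      have t2 := psi_triangle adj c hconn hc m.2 a2 b2
      dsimp only at hcost ⊢
      linarith
    have doS : (a1, a2) ∈ Mset adj Z vstart vgoal →
        (b1, b2) ∈ Mset adj Z vstart vgoal →
        W adj c cbar cs Z (a1, a2) (b1, b2) ≤
          jsgCost c cbar cs Z (a1, a2) (b1, b2) →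
        ∃ w, IsPath (cjsgAdj adj Z vstart vgoal) m t w ∧
          Wcost adj c cbar cs Z w ≤
            psi adj c m.1 (a1, a2).1 + psi adj c m.2 (a1, a2).2 +
              Q c cbar cs Z (((a1, a2), (b1, b2)) :: u') := by
      intro hsM htM hWle
      obtain ⟨w, hw, hcost⟩ := ih (b1, b2) t hrest ht (b1, b2) htM
      refine ⟨(m, (a1, a2)) :: ((a1, a2), (b1, b2)) :: w,
        ⟨rfl, ⟨hm, hsM⟩, rfl, ⟨hsM, htM⟩, hw⟩, ?_⟩
      have e1 : Wcost adj c cbar cs Z ((m, (a1, a2)) :: ((a1, a2), (b1, b2)) :: w)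
          = W adj c cbar cs Z m (a1, a2) +
            (W adj c cbar cs Z (a1, a2) (b1, b2) + Wcost adj c cbar cs Z w) := by
        simp [Wcost]
      have hWm := W_le_psi adj c cbar cs Z m (a1, a2)
      rw [e1, hQ]
      dsimp only at hcost hWm ⊢
      rw [psi_self adj c hconn hc, psi_self adj c hconn hc] at hcost
      linarith
    by_cases h1 : a1 = b1 ∧ a2 = b2
    · obtain ⟨hb1, hb2⟩ := h1
      subst hb1; subst hb2
      apply doN
      simp [jsgCost, psi_self adj c hconn hc]
    · by_cases h2 : a1 = b1
      · subst h2
        have hb2 : a2 ≠ b2 := fun h => h1 ⟨rfl, h⟩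
        have hadj2 : adj a2 b2 := by
          rcases hA2 with h | h
          · exact absurd h.symm hb2
          · exact h
        by_cases hz : a1 ∈ Z a2 b2
        · have hsM : (a1, a2) ∈ Mset adj Z vstart vgoal :=
            Or.inl ⟨a2, b2, a1, ⟨hadj2, a1, hz⟩, hz, Or.inl rfl⟩
          have htM : (a1, b2) ∈ Mset adj Z vstart vgoal :=
            Or.inl ⟨a2, b2, a1, ⟨hadj2, a1, hz⟩, hz, Or.inr (Or.inl rfl)⟩
          apply doS hsM htM
          have hW : W adj c cbar cs Z (a1, a2) (a1, b2)
              = min (cbar a2 b2 + cs) (psi adj c a1 a1 + psi adj c a2 b2) := by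
            unfold W; rw [if_pos ⟨rfl, hadj2, hz⟩]
          have hJ : jsgCost c cbar cs Z (a1, a2) (a1, b2)
              = min (c a2 b2) (cbar a2 b2 + cs) := by
            unfold jsgCost
            rw [if_neg (fun h => hb2 h.2), if_pos rfl, if_pos hz]
          rw [hW, hJ]
          have h3 : psi adj c a1 a1 + psi adj c a2 b2 ≤ c a2 b2 := by
            rw [psi_self adj c hconn hc]
            simpa using psi_edge adj c hc hadj2
          exact le_min ((min_le_right _ _).trans h3) (min_le_left _ _)
        · apply doN
          have hJ : jsgCost c cbar cs Z (a1, a2) (a1, b2) = c a2 b2 := by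
            unfold jsgCost
            rw [if_neg (fun h => hb2 h.2), if_pos rfl, if_neg hz]
          rw [hJ, psi_self adj c hconn hc, zero_add]
          exact psi_edge adj c hc hadj2
      · have hadj1 : adj a1 b1 := by
          rcases hA1 with h | h
          · exact absurd h.symm h2
          · exact h
        by_cases h3 : a2 = b2
        · subst h3
          by_cases hz : a2 ∈ Z a1 b1
          · have hsM : (a1, a2) ∈ Mset adj Z vstart vgoal :=
              Or.inl ⟨a1, b1, a2, ⟨hadj1, a2, hz⟩, hz,
                Or.inr (Or.inr (Or.inl rfl))⟩
            have htM : (b1, a2) ∈ Mset adj Z vstart vgoal :=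
              Or.inl ⟨a1, b1, a2, ⟨hadj1, a2, hz⟩, hz,
                Or.inr (Or.inr (Or.inr rfl))⟩
            apply doS hsM htM
            have hW : W adj c cbar cs Z (a1, a2) (b1, a2)
                = min (cbar a1 b1 + cs) (psi adj c a1 b1 + psi adj c a2 a2) := by
              unfold W
              rw [if_neg (fun h => h2 h.1), if_pos ⟨rfl, hadj1, hz⟩]
            have hJ : jsgCost c cbar cs Z (a1, a2) (b1, a2)
                = min (c a1 b1) (cbar a1 b1 + cs) := by
              unfold jsgCost
              rw [if_neg (fun h => h2 h.1), if_neg h2, if_pos rfl, if_pos hz]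
            rw [hW, hJ]
            have h4 : psi adj c a1 b1 + psi adj c a2 a2 ≤ c a1 b1 := by
              rw [psi_self adj c hconn hc]
              simpa using psi_edge adj c hc hadj1
            exact le_min ((min_le_right _ _).trans h4) (min_le_left _ _)
          · apply doN
            have hJ : jsgCost c cbar cs Z (a1, a2) (b1, a2) = c a1 b1 := by
              unfold jsgCost
              rw [if_neg (fun h => h2 h.1), if_neg h2, if_pos rfl, if_neg hz]
            rw [hJ, psi_self adj c hconn hc, add_zero]
            exact psi_edge adj c hc hadj1
        · have hadj2 : adj a2 b2 := by
            rcases hA2 with h | h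
            · exact absurd h.symm h3
            · exact h
          apply doN
          have hJ : jsgCost c cbar cs Z (a1, a2) (b1, b2)
              = c a1 b1 + c a2 b2 := by
            unfold jsgCost
            rw [if_neg (fun h => h2 h.1), if_neg h2, if_neg h3]
          rw [hJ]
          exact add_le_add (psi_edge adj c hc hadj1) (psi_edge adj c hc hadj2)

end Aux

/-- The optimal path cost obtained by planning on the CJSG equals the optimal
path cost obtained by planning directly on the JSG: `Q(u†) = Q(u*)`. -/
theorem cjsg_eq_jsg (adj : V → V → Prop) (c cbar : V → V → ℝ)
    (cs : ℝ) (Z : V → V → Set V) (vstart vgoal : V)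
    (hconn : StronglyConnected adj) (hc : ∀ i j, 0 ≤ c i j)
    (hcbar : ∀ i j, 0 ≤ cbar i j) (hcs : 0 ≤ cs) :
    cjsgOpt adj c cbar cs Z vstart vgoal =
      Qstar adj c cbar cs Z vstart vgoal := by
  have hstart : (vstart, vstart) ∈ Mset adj Z vstart vgoal := by
    right; left; rfl
  have hgoal : (vgoal, vgoal) ∈ Mset adj Z vstart vgoal := by
    right; right; rfl
  refine le_antisymm ?_ ?_
  · unfold Qstar jsgDist
    refine le_csInf ?_ ?_
    · obtain ⟨u0, hu0⟩ := jsg_conn adj hconn (vstart, vstart) (vgoal, vgoal)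
      exact ⟨_, u0, hu0, rfl⟩
    · rintro x ⟨u, hu, rfl⟩
      obtain ⟨w, hw, hcost⟩ := key adj c cbar cs Z vstart vgoal hconn hc hcbar
        hcs u (vstart, vstart) (vgoal, vgoal) hu hgoal (vstart, vstart) hstart
      have h1 : cjsgOpt adj c cbar cs Z vstart vgoal ≤
          Wcost adj c cbar cs Z w := by
        refine csInf_le ⟨0, ?_⟩ ⟨w, hw, rfl⟩
        rintro y ⟨v, _, rfl⟩
        exact Wcost_nonneg adj c cbar cs Z hconn hc hcbar hcs v
      dsimp only at hcost
      rw [psi_self adj c hconn hc] at hcost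
      linarith
  · refine le_csInf ⟨_, [((vstart, vstart), (vgoal, vgoal))],
      ⟨rfl, ⟨hstart, hgoal⟩, rfl⟩, rfl⟩ ?_
    rintro x ⟨w, hw, rfl⟩
    exact jsgDist_le_Wcost adj c cbar cs Z hconn hc hcbar hcs vstart vgoal
      w _ _ hw
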